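/- Let σ > 0, N ∈ ℕ, and for j = 1,…,N let k_j ∈ ℕ and α_j ∈ ℝ. Set k* = max_j k_j and let T* > E_{k*}(0). Then for every λ ∈ (0,1), ∫₀ᵗ e^{-σ(t-τ)} ∏_{j=1}^N L_{k_j}(T*+τ)^{α_j} dτ = (1/σ) ∏_{j=1}^N L_{k_j}(T*+t)^{α_j} + O(t^{-λ}) as t → ∞. -/

import Mathlib

/-- The iterated exponential: `E 0 t = t`, `E (m+1) t = exp (E m t)`. -/
noncomputable def itExp : ℕ → ℝ → ℝ
  | 0 => fun t => t
  | m + 1 => fun t => Real.exp (itExp m t)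

/-- The iterated logarithm: `L 0 t = t`, `L (m+1) t = log (L m t)`. -/
noncomputable def itLog : ℕ → ℝ → ℝ
  | 0 => fun t => t
  | m + 1 => fun t => Real.log (itLog m t)

lemma itExp_exp (k : ℕ) (c : ℝ) : itExp k (Real.exp c) = Real.exp (itExp k c) := by
  induction k with
  | zero => rfl
  | succ m ih => simp [itExp, ih]

lemma itExp_le_itExp {m n : ℕ} (h : m ≤ n) : itExp m 0 ≤ itExp n 0 := by
  induction n with
  | zero => obtain rfl := Nat.le_zero.mp h; exact le_rfl
  | succ p ih =>
    rcases Nat.lt_or_ge m (p+1) with h' | h'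
    · exact le_trans (ih (Nat.lt_succ_iff.mp h')) (by
        simpa [itExp] using ((Real.add_one_le_exp (itExp p 0)).trans' (by linarith)))
    · have : m = p + 1 := le_antisymm h h'
      subst this; rfl

lemma lt_itLog {k : ℕ} {c x : ℝ} (h : itExp k c < x) : c < itLog k x := by
  induction k generalizing c with
  | zero => exact h
  | succ m ih =>
    have h' : itExp m (Real.exp c) < x := by rw [itExp_exp]; exact h
    have := ih h'
    have hpos : 0 < itLog m x := lt_trans (Real.exp_pos c) this
    exact (Real.lt_log_iff_exp_lt hpos).mpr this

lemma itLog_pos {k : ℕ} {x : ℝ} (h : itExp k 0 < x) : 0 < itLog k x := lt_itLog h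

lemma itLog_mono {k : ℕ} {x y : ℝ} (h : itExp k 0 < x) (hxy : x ≤ y) :
    itLog k x ≤ itLog k y := by
  induction k with
  | zero => exact hxy
  | succ m ih =>
    have hx : itExp m 0 < x := lt_of_le_of_lt (itExp_le_itExp (Nat.le_succ m)) h
    exact Real.log_le_log (itLog_pos hx) (ih hx)

lemma itLog_succ_mono {k : ℕ} {x y : ℝ} (h : itExp k 0 < x) (hxy : x ≤ y) :
    itLog (k+1) x ≤ itLog (k+1) y :=
  Real.log_le_log (itLog_pos h) (itLog_mono h hxy)

lemma itLog_le_self {k : ℕ} {x : ℝ} (h : itExp k 0 < x) : itLog k x ≤ x := by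
  induction k with
  | zero => exact le_rfl
  | succ m ih =>
    have hx : itExp m 0 < x := lt_of_le_of_lt (itExp_le_itExp (Nat.le_succ m)) h
    exact le_trans (Real.log_le_self (itLog_pos hx).le) (ih hx)

lemma itLog_succ_le_log {k : ℕ} {x : ℝ} (h : itExp k 0 < x) :
    itLog (k+1) x ≤ Real.log x :=
  Real.log_le_log (itLog_pos h) (itLog_le_self h)

lemma hasDerivAt_itLog' {k : ℕ} {x : ℝ} (h : ∀ p < k, itLog p x ≠ 0) :
    HasDerivAt (itLog k) (∏ p ∈ Finset.range k, (itLog p x)⁻¹) x := by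
  induction k with
  | zero => simpa [itLog] using (hasDerivAt_id' x)
  | succ m ih =>
    have h1 : HasDerivAt Real.log (itLog m x)⁻¹ (itLog m x) :=
      Real.hasDerivAt_log (h m (Nat.lt_succ_self m))
    have h2 := h1.comp x (ih (fun p hp => h p (hp.trans (Nat.lt_succ_self m))))
    simpa [itLog, Finset.prod_range_succ, mul_comm, Function.comp_def] using h2

lemma integral_exp_affine (c d a b : ℝ) (hc : c ≠ 0) :
    ∫ τ in a..b, Real.exp (c*τ + d) =
      (Real.exp (c*b + d) - Real.exp (c*a + d))/c := by
  have hderiv : ∀ τ ∈ Set.uIcc a b,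
      HasDerivAt (fun τ => Real.exp (c*τ + d)/c) (Real.exp (c*τ + d)) τ := by
    intro τ _
    have h1 : HasDerivAt (fun τ : ℝ => c*τ + d) c τ := by
      simpa using ((hasDerivAt_id τ).const_mul c).add_const d
    have h2 := (h1.exp).div_const c
    simpa [mul_div_assoc, mul_div_cancel_right₀ _ hc] using h2
  have := intervalIntegral.integral_eq_sub_of_hasDerivAt hderiv
    ((Real.continuous_exp.comp (by continuity)).intervalIntegrable a b)
  rw [this]; ring

lemma integral_exp_decay_le {c : ℝ} (hc : 0 < c) {a b : ℝ} (hab : a ≤ b) :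
    ∫ τ in a..b, Real.exp (-(c*(b - τ))) ≤ 1/c := by
  have h : ∀ τ : ℝ, -(c*(b - τ)) = c*τ + (-(c*b)) := fun τ => by ring
  simp only [h]
  rw [integral_exp_affine c (-(c*b)) a b hc.ne']
  rw [show c*b + -(c*b) = 0 by ring, Real.exp_zero]
  have h2 : 0 ≤ Real.exp (c*a + -(c*b)) := (Real.exp_pos _).le
  gcongr
  linarith

lemma integral_exp_decay_eq {c : ℝ} (hc : 0 < c) (t : ℝ) :
    ∫ τ in (0:ℝ)..t, Real.exp (-(c*(t - τ))) = (1 - Real.exp (-(c*t)))/c := by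
  have h : ∀ τ : ℝ, -(c*(t - τ)) = c*τ + (-(c*t)) := fun τ => by ring
  simp only [h]
  rw [integral_exp_affine c (-(c*t)) 0 t hc.ne']
  congr 1
  rw [show c*t + -(c*t) = 0 by ring, Real.exp_zero]
  ring_nf

lemma mul_exp_neg_le {c u : ℝ} (hc : 0 < c) (hu : 0 ≤ u) :
    u * Real.exp (-(c*u)) ≤ 1/c := by
  have h2 : c*u ≤ Real.exp (c*u) := by linarith [Real.add_one_le_exp (c*u)]
  have h3 : u ≤ Real.exp (c*u)/c := by rw [le_div_iff₀ hc]; linarith [mul_comm c u, h2]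
  calc u * Real.exp (-(c*u)) ≤ (Real.exp (c*u)/c) * Real.exp (-(c*u)) :=
        mul_le_mul_of_nonneg_right h3 (Real.exp_pos _).le
    _ = 1/c := by rw [Real.exp_neg]; field_simp

set_option maxHeartbeats 2000000 in
/-- with `σ > 0`, indices `k_j ≥ 1`, exponents `α_j ∈ ℝ`, `k* = max_j k_j`
and `T* > E_{k*}(0)`, for every `λ ∈ (0,1)`,
`∫₀ᵗ e^{-σ(t-τ)} ∏_j L_{k_j}(T*+τ)^{α_j} dτ = (1/σ) ∏_j L_{k_j}(T*+t)^{α_j} + O(t^{-λ})`. -/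
theorem stmt5 (σ : ℝ) (hσ : 0 < σ) (N : ℕ) (hN : 1 ≤ N)
    (k : Fin N → ℕ) (hk : ∀ j, 1 ≤ k j) (a : Fin N → ℝ)
    (Tstar : ℝ) (hT : itExp (Finset.univ.sup k) 0 < Tstar) :
    ∀ lam ∈ Set.Ioo (0:ℝ) 1, ∃ C T : ℝ, 0 < C ∧ ∀ t ≥ T,
      |(∫ τ in (0:ℝ)..t,
          Real.exp (-σ * (t - τ)) * ∏ j, itLog (k j) (Tstar + τ) ^ (a j)) -
        (1 / σ) * ∏ j, itLog (k j) (Tstar + t) ^ (a j)| ≤ C * t ^ (-lam) := by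
  intro lam hlam
  obtain ⟨hlam0, hlam1⟩ := hlam
  set kstar := Finset.univ.sup k with hkstar
  have hkj : ∀ j, k j ≤ kstar := fun j => Finset.le_sup (Finset.mem_univ j)
  have hTj : ∀ m, m ≤ kstar → itExp m 0 < Tstar :=
    fun m hm => lt_of_le_of_lt (itExp_le_itExp hm) hT
  have hT1 : 1 < Tstar := by
    have h0 : (1:ℕ) ≤ kstar := le_trans (hk ⟨0, hN⟩) (hkj ⟨0, hN⟩)
    have := hTj 1 h0
    simpa [itExp] using this
  set f : ℝ → ℝ := fun τ => ∏ j, itLog (k j) (Tstar + τ) ^ (a j) with hfdef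
  set g : ℝ → ℝ := fun τ => ∑ j, a j * itLog (k j + 1) (Tstar + τ) with hgdef
  set g' : ℝ → ℝ :=
    fun τ => ∑ j, a j * ∏ p ∈ Finset.range (k j + 1), (itLog p (Tstar + τ))⁻¹ with hg'def
  set d : ℝ := Tstar - itExp kstar 0 with hddef
  have hdpos : 0 < d := by rw [hddef]; linarith
  have hdom : ∀ τ : ℝ, -d < τ → ∀ m, m ≤ kstar → itExp m 0 < Tstar + τ := by
    intro τ hτ m hm
    have h1 := itExp_le_itExp hm
    rw [hddef] at hτ; linarith
  have hLpos : ∀ τ : ℝ, -d < τ → ∀ j : Fin N, 0 < itLog (k j) (Tstar + τ) :=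
    fun τ hτ j => itLog_pos (hdom τ hτ _ (hkj j))
  have hfg : ∀ τ : ℝ, -d < τ → f τ = Real.exp (g τ) := by
    intro τ hτ
    rw [hfdef, hgdef, Real.exp_sum]
    apply Finset.prod_congr rfl
    intro j _
    rw [Real.rpow_def_of_pos (hLpos τ hτ j)]
    congr 1
    rw [show itLog (k j + 1) (Tstar + τ) = Real.log (itLog (k j) (Tstar + τ)) from rfl]
    ring
  have hfpos : ∀ τ : ℝ, -d < τ → 0 < f τ := by
    intro τ hτ; rw [hfg τ hτ]; exact Real.exp_pos _
  -- derivative of g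
  have hgd : ∀ τ : ℝ, -d < τ → HasDerivAt g (g' τ) τ := by
    intro τ hτ
    apply HasDerivAt.fun_sum
    intro j _
    have h1 : HasDerivAt (fun x : ℝ => Tstar + x) 1 τ := by
      simpa using (hasDerivAt_id τ).const_add Tstar
    have h2 : HasDerivAt (itLog (k j + 1))
        (∏ p ∈ Finset.range (k j + 1), (itLog p (Tstar + τ))⁻¹) (Tstar + τ) := by
      apply hasDerivAt_itLog'
      intro p hp
      exact (itLog_pos (hdom τ hτ p (le_trans (Nat.lt_succ_iff.mp hp) (hkj j)))).ne'
    have h3 := (h2.comp τ h1).const_mul (a j)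
    simpa [Function.comp] using h3
  have hfd : ∀ s : ℝ, -d < s → HasDerivAt f (Real.exp (g s) * g' s) s := by
    intro s hs
    apply ((hgd s hs).exp).congr_of_eventuallyEq
    filter_upwards [Ioi_mem_nhds hs] with τ hτ
    exact hfg τ hτ
  -- constants
  set A1 : ℝ := ∑ j, |a j| * |itLog (k j + 1) Tstar| with hA1def
  set A2 : ℝ := ∑ j, |a j| with hA2def
  have hA2nn : 0 ≤ A2 := Finset.sum_nonneg fun j _ => abs_nonneg _
  -- per-factor bound on itLog (k j + 1)
  have hLj : ∀ τ : ℝ, 0 ≤ τ → ∀ j : Fin N,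
      |itLog (k j + 1) (Tstar + τ)| ≤
        |itLog (k j + 1) Tstar| + |Real.log (Real.log (Tstar + τ))| := by
    intro τ hτ j
    have hx : Tstar ≤ Tstar + τ := by linarith
    have hdomj : itExp (k j) 0 < Tstar := hTj _ (hkj j)
    have hdomj' : itExp (k j) 0 < Tstar + τ := lt_of_lt_of_le hdomj hx
    have hlow : itLog (k j + 1) Tstar ≤ itLog (k j + 1) (Tstar + τ) :=
      itLog_succ_mono hdomj hx
    have hupp : itLog (k j + 1) (Tstar + τ) ≤ Real.log (Real.log (Tstar + τ)) := by
      obtain ⟨m, hm⟩ : ∃ m, k j = m + 1 :=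
        ⟨k j - 1, (Nat.succ_pred_eq_of_pos (hk j)).symm⟩
      have hmk : m ≤ kstar := le_trans (by omega) (hkj j)
      have h5 : itLog (k j) (Tstar + τ) ≤ Real.log (Tstar + τ) := by
        rw [hm]
        exact itLog_succ_le_log (hdom τ (by linarith) m hmk)
      exact Real.log_le_log (itLog_pos hdomj') h5
    refine abs_le.mpr ⟨?_, ?_⟩
    · have := neg_abs_le (itLog (k j + 1) Tstar)
      have h6 := abs_nonneg (Real.log (Real.log (Tstar + τ)))
      linarith
    · have := le_abs_self (Real.log (Real.log (Tstar + τ)))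
      have h6 := abs_nonneg (itLog (k j + 1) Tstar)
      linarith
  -- bound on g
  have hgb : ∀ τ : ℝ, 0 ≤ τ →
      |g τ| ≤ A1 + A2 * |Real.log (Real.log (Tstar + τ))| := by
    intro τ hτ
    calc |g τ| ≤ ∑ j, |a j * itLog (k j + 1) (Tstar + τ)| :=
          Finset.abs_sum_le_sum_abs _ _
      _ ≤ ∑ j, |a j| * (|itLog (k j + 1) Tstar| + |Real.log (Real.log (Tstar + τ))|) := by
          apply Finset.sum_le_sum
          intro j _
          rw [abs_mul]
          exact mul_le_mul_of_nonneg_left (hLj τ hτ j) (abs_nonneg _)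
      _ = A1 + A2 * |Real.log (Real.log (Tstar + τ))| := by
          rw [hA1def, hA2def]
          simp [mul_add, Finset.sum_add_distrib, Finset.sum_mul]
  -- uniform bound on [0, t]
  set Mt : ℝ → ℝ := fun t => Real.exp (A1 + A2 *
      (|Real.log (Real.log Tstar)| + |Real.log (Real.log (Tstar + t))|)) with hMtdef
  have hMt : ∀ t : ℝ, 0 ≤ t → ∀ τ, 0 ≤ τ → τ ≤ t → f τ ≤ Mt t := by
    intro t ht τ hτ0 hτt
    rw [hfg τ (by linarith), hMtdef]
    apply Real.exp_le_exp.mpr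
    have h1 := hgb τ hτ0
    have hTpos : (0:ℝ) < Tstar := by linarith
    have hlm1 : Real.log Tstar ≤ Real.log (Tstar + τ) :=
      Real.log_le_log hTpos (by linarith)
    have hlm2 : Real.log (Tstar + τ) ≤ Real.log (Tstar + t) :=
      Real.log_le_log (by linarith) (by linarith)
    have hlogT : 0 < Real.log Tstar := Real.log_pos hT1
    have h2 : Real.log (Real.log Tstar) ≤ Real.log (Real.log (Tstar + τ)) :=
      Real.log_le_log hlogT hlm1
    have h3 : Real.log (Real.log (Tstar + τ)) ≤ Real.log (Real.log (Tstar + t)) :=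
      Real.log_le_log (lt_of_lt_of_le hlogT hlm1) hlm2
    have h4 : |Real.log (Real.log (Tstar + τ))| ≤
        |Real.log (Real.log Tstar)| + |Real.log (Real.log (Tstar + t))| := by
      refine abs_le.mpr ⟨?_, ?_⟩
      · have := neg_abs_le (Real.log (Real.log Tstar))
        have h6 := abs_nonneg (Real.log (Real.log (Tstar + t)))
        linarith
      · have := le_abs_self (Real.log (Real.log (Tstar + t)))
        have h6 := abs_nonneg (Real.log (Real.log Tstar))
        linarith
    have h5 := mul_le_mul_of_nonneg_left h4 hA2nn
    have h7 := le_abs_self (g τ)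
    linarith
  have hMtpos : ∀ t : ℝ, 0 < Mt t := fun t => Real.exp_pos _
  -- bound on g'
  set R : Fin N → ℝ := fun j => ∏ p ∈ Finset.range (k j), (itLog (p+1) Tstar)⁻¹ with hRdef
  have hLTpos : ∀ p, p ≤ kstar → 0 < itLog p Tstar := fun p hp => itLog_pos (hTj p hp)
  have hRpos : ∀ j, 0 < R j := by
    intro j
    rw [hRdef]
    apply Finset.prod_pos
    intro p hp
    exact inv_pos.mpr (hLTpos (p+1) (le_trans (Finset.mem_range.mp hp) (hkj j)))
  set Cg : ℝ := ∑ j, |a j| * R j with hCgdef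
  have hCgnn : 0 ≤ Cg :=
    Finset.sum_nonneg fun j _ => mul_nonneg (abs_nonneg _) (hRpos j).le
  have hg'b : ∀ τ : ℝ, 0 ≤ τ → |g' τ| ≤ Cg * (Tstar + τ)⁻¹ := by
    intro τ hτ
    have hTτ : (0:ℝ) < Tstar + τ := by linarith
    have hper : ∀ j : Fin N,
        |∏ p ∈ Finset.range (k j + 1), (itLog p (Tstar + τ))⁻¹| ≤ R j * (Tstar + τ)⁻¹ := by
      intro j
      have hppos : ∀ p ∈ Finset.range (k j + 1), 0 < (itLog p (Tstar + τ))⁻¹ := by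
        intro p hp
        exact inv_pos.mpr (itLog_pos (hdom τ (by linarith) p
          (le_trans (Nat.lt_succ_iff.mp (Finset.mem_range.mp hp)) (hkj j))))
      rw [abs_of_pos (Finset.prod_pos hppos)]
      rw [Finset.prod_range_succ']
      have h0 : itLog 0 (Tstar + τ) = Tstar + τ := rfl
      rw [h0]
      apply mul_le_mul_of_nonneg_right _ (inv_nonneg.mpr hTτ.le)
      rw [hRdef]
      apply Finset.prod_le_prod
      · intro p hp
        exact (inv_pos.mpr (itLog_pos (hdom τ (by linarith) (p+1)
          (le_trans (Finset.mem_range.mp hp) (hkj j))))).le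
      · intro p hp
        have hpk : p + 1 ≤ kstar := le_trans (Finset.mem_range.mp hp) (hkj j)
        have hm := itLog_mono (hTj (p+1) hpk) (show Tstar ≤ Tstar + τ by linarith)
        exact inv_anti₀ (hLTpos (p+1) hpk) hm
    calc |g' τ| ≤ ∑ j, |a j * ∏ p ∈ Finset.range (k j + 1), (itLog p (Tstar + τ))⁻¹| :=
          Finset.abs_sum_le_sum_abs _ _
      _ ≤ ∑ j, |a j| * (R j * (Tstar + τ)⁻¹) := by
          apply Finset.sum_le_sum
          intro j _
          rw [abs_mul]
          exact mul_le_mul_of_nonneg_left (hper j) (abs_nonneg _)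
      _ = Cg * (Tstar + τ)⁻¹ := by
          rw [hCgdef, Finset.sum_mul]
          apply Finset.sum_congr rfl
          intro j _; ring
  -- littleO: (log y)^A2 ≤ y^(1-lam) for large y
  obtain ⟨Y, hY⟩ : ∃ Y : ℝ, ∀ y ≥ Y, Real.log y ^ A2 ≤ y ^ (1 - lam) := by
    have h := isLittleO_log_rpow_rpow_atTop A2 (show (0:ℝ) < 1 - lam by linarith)
    have h2 := h.def one_pos
    rw [Filter.eventually_atTop] at h2
    obtain ⟨Y, hY⟩ := h2
    refine ⟨max Y 1, fun y hy => ?_⟩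
    have h3 := hY y (le_trans (le_max_left _ _) hy)
    have hy1 : (1:ℝ) ≤ y := le_trans (le_max_right _ _) hy
    rw [Real.norm_eq_abs, Real.norm_eq_abs, one_mul] at h3
    calc Real.log y ^ A2 ≤ |Real.log y ^ A2| := le_abs_self _
      _ ≤ |y ^ (1 - lam)| := h3
      _ = y ^ (1 - lam) := abs_of_nonneg (Real.rpow_nonneg (by linarith) _)
  set C7 : ℝ := Real.exp A1 * Cg with hC7def
  have hC7nn : 0 ≤ C7 := mul_nonneg (Real.exp_pos _).le hCgnn
  set τstar : ℝ := max Y (max (Real.exp 1) 1) with hτsdef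
  have hτs1 : (1:ℝ) ≤ τstar := le_trans (le_max_right _ _) (le_max_right _ _)
  -- derivative bound for s ≥ τstar
  have hfdb : ∀ s : ℝ, τstar ≤ s → |Real.exp (g s) * g' s| ≤ C7 * s ^ (-lam) := by
    intro s hs
    have hs1 : (1:ℝ) ≤ s := le_trans hτs1 hs
    have hs0 : (0:ℝ) < s := by linarith
    have hse : Real.exp 1 ≤ s :=
      le_trans (le_trans (le_max_left _ _) (le_max_right _ _)) hs
    have hsY : Y ≤ s := le_trans (le_max_left _ _) hs
    have hTs0 : (0:ℝ) < Tstar + s := by linarith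
    have hlog1 : 1 ≤ Real.log (Tstar + s) := by
      rw [show (1:ℝ) = Real.log (Real.exp 1) from (Real.log_exp 1).symm]
      exact Real.log_le_log (Real.exp_pos 1) (by linarith)
    have hllnn : 0 ≤ Real.log (Real.log (Tstar + s)) := Real.log_nonneg hlog1
    have h1 : g s ≤ A1 + A2 * Real.log (Real.log (Tstar + s)) := by
      have h := hgb s hs0.le
      rw [abs_of_nonneg hllnn] at h
      exact le_trans (le_abs_self _) h
    have h2 : Real.exp (g s) ≤ Real.exp A1 * Real.log (Tstar + s) ^ A2 := by
      rw [Real.rpow_def_of_pos (by linarith : (0:ℝ) < Real.log (Tstar + s)), ← Real.exp_add]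
      apply Real.exp_le_exp.mpr
      have := mul_comm A2 (Real.log (Real.log (Tstar + s)))
      linarith
    have h3 : |g' s| ≤ Cg * (Tstar + s)⁻¹ := hg'b s hs0.le
    have h4 : Real.log (Tstar + s) ^ A2 ≤ (Tstar + s) ^ (1 - lam) := hY (Tstar + s) (by linarith)
    have h5 : Real.exp (g s) ≤ Real.exp A1 * (Tstar + s) ^ (1 - lam) :=
      le_trans h2 (mul_le_mul_of_nonneg_left h4 (Real.exp_pos A1).le)
    calc |Real.exp (g s) * g' s| = Real.exp (g s) * |g' s| := by
          rw [abs_mul, abs_of_pos (Real.exp_pos _)]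
      _ ≤ (Real.exp A1 * (Tstar + s) ^ (1 - lam)) * (Cg * (Tstar + s)⁻¹) := by
          apply mul_le_mul h5 h3 (abs_nonneg _)
          positivity
      _ = C7 * ((Tstar + s) ^ (1 - lam) * (Tstar + s)⁻¹) := by rw [hC7def]; ring
      _ = C7 * (Tstar + s) ^ (-lam) := by
          congr 1
          rw [← Real.rpow_neg_one (Tstar + s), ← Real.rpow_add hTs0]
          ring_nf
      _ ≤ C7 * s ^ (-lam) := by
          apply mul_le_mul_of_nonneg_left _ hC7nn
          exact Real.rpow_le_rpow_of_nonpos hs0 (by linarith) (by linarith)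
  -- the main estimate for fixed large t
  have key : ∀ t : ℝ, 1 ≤ t → 2*τstar ≤ t →
      |(∫ τ in (0:ℝ)..t, Real.exp (-(σ*(t - τ))) * f τ) - (1/σ) * f t| ≤
        (4*C7*(2:ℝ)^lam/σ^2) * t ^ (-lam) +
          (Real.exp (-(σ*(t/2))) * (2*Mt t) * (t/2) + Mt t * Real.exp (-(σ*t))/σ) := by
    intro t ht1 ht2
    have ht0 : (0:ℝ) < t := by linarith
    have hhalf : τstar ≤ t/2 := by linarith
    have ht20 : (0:ℝ) < t/2 := by linarith
    set F : ℝ → ℝ := fun τ => Real.exp (-(σ*(t - τ))) * (f τ - f t) with hFdef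
    have hFca : ∀ x : ℝ, -d < x → ContinuousAt F x := by
      intro x hx
      rw [hFdef]
      apply ContinuousAt.mul
      · exact (Real.continuous_exp.comp
          (continuous_const.mul (continuous_const.sub continuous_id)).neg).continuousAt
      · exact ((hfd x hx).continuousAt).sub continuousAt_const
    have hFc : ∀ u v : ℝ, 0 ≤ u → 0 ≤ v → ContinuousOn F (Set.uIcc u v) := by
      intro u v hu hv
      intro x hx
      apply (hFca x _).continuousWithinAt
      rcases Set.mem_uIcc.mp hx with ⟨h1, _⟩ | ⟨h1, _⟩ <;> linarith
    have hexpC : Continuous (fun τ : ℝ => Real.exp (-(σ*(t - τ)))) :=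
      Real.continuous_exp.comp (continuous_const.mul (continuous_const.sub continuous_id)).neg
    have iF : ∀ u v : ℝ, 0 ≤ u → 0 ≤ v → IntervalIntegrable F MeasureTheory.volume u v :=
      fun u v hu hv => (hFc u v hu hv).intervalIntegrable
    have iE : IntervalIntegrable (fun τ => f t * Real.exp (-(σ*(t - τ))))
        MeasureTheory.volume 0 t :=
      (continuous_const.mul hexpC).intervalIntegrable _ _
    have e1 : (∫ τ in (0:ℝ)..t, Real.exp (-(σ*(t - τ))) * f τ) =
        (∫ τ in (0:ℝ)..t, F τ) + f t * ((1 - Real.exp (-(σ*t)))/σ) := by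
      have heq : ∀ τ : ℝ, Real.exp (-(σ*(t - τ))) * f τ
          = F τ + f t * Real.exp (-(σ*(t - τ))) := by
        intro τ; rw [hFdef]; ring
      rw [intervalIntegral.integral_congr (g := fun τ => F τ + f t * Real.exp (-(σ*(t - τ))))
        (fun τ _ => heq τ)]
      rw [intervalIntegral.integral_add (iF 0 t le_rfl ht0.le) iE]
      rw [intervalIntegral.integral_const_mul, integral_exp_decay_eq hσ t]
    have e2 : (∫ τ in (0:ℝ)..t, F τ)
        = (∫ τ in (0:ℝ)..(t/2), F τ) + ∫ τ in (t/2)..t, F τ :=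
      (intervalIntegral.integral_add_adjacent_intervals (iF 0 (t/2) le_rfl ht20.le)
        (iF (t/2) t ht20.le ht0.le)).symm
    have hft : 0 < f t := hfpos t (by linarith)
    have hftM : f t ≤ Mt t := hMt t ht0.le t ht0.le le_rfl
    have e3 : |∫ τ in (0:ℝ)..(t/2), F τ| ≤ Real.exp (-(σ*(t/2))) * (2*Mt t) * (t/2) := by
      have hb : ∀ x ∈ Set.uIoc (0:ℝ) (t/2), ‖F x‖ ≤ Real.exp (-(σ*(t/2))) * (2*Mt t) := by
        intro x hx
        rw [Set.uIoc_of_le ht20.le] at hx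
        obtain ⟨hx0, hxt⟩ := hx
        rw [hFdef, Real.norm_eq_abs, abs_mul, abs_of_pos (Real.exp_pos _)]
        have hfx : 0 < f x := hfpos x (by linarith)
        have hfxM : f x ≤ Mt t := hMt t ht0.le x hx0.le (by linarith)
        have h5 : |f x - f t| ≤ 2 * Mt t := by
          rw [abs_le]
          constructor <;> nlinarith [hMtpos t]
        have h6 : Real.exp (-(σ*(t - x))) ≤ Real.exp (-(σ*(t/2))) := by
          apply Real.exp_le_exp.mpr
          nlinarith
        exact mul_le_mul h6 h5 (abs_nonneg _) (Real.exp_pos _).le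
      have h := intervalIntegral.norm_integral_le_of_norm_le_const hb
      rw [Real.norm_eq_abs] at h
      calc |∫ τ in (0:ℝ)..(t/2), F τ| ≤ Real.exp (-(σ*(t/2))) * (2*Mt t) * |t/2 - 0| := h
        _ = Real.exp (-(σ*(t/2))) * (2*Mt t) * (t/2) := by
            rw [sub_zero, abs_of_pos ht20]
    set K : ℝ := C7 * (t/2) ^ (-lam) with hKdef
    have hKnn : 0 ≤ K := mul_nonneg hC7nn (Real.rpow_nonneg ht20.le _)
    have hMVT : ∀ τ, t/2 ≤ τ → τ ≤ t → |f t - f τ| ≤ K * (t - τ) := by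
      intro τ hτl hτr
      have hmain := norm_image_sub_le_of_norm_deriv_le_segment'
        (f := f) (f' := fun x => Real.exp (g x) * g' x) (a := τ) (b := t) (C := K)
        ?_ ?_ t ⟨hτr, le_rfl⟩
      · simpa [Real.norm_eq_abs] using hmain
      · intro x hx
        obtain ⟨h1, _⟩ := hx
        refine (hfd x ?_).hasDerivWithinAt
        have : (0:ℝ) < x := by linarith
        linarith
      · intro x hx
        obtain ⟨h1, _⟩ := hx
        have hxτ : τstar ≤ x := le_trans hhalf (le_trans hτl h1)
        rw [Real.norm_eq_abs]
        refine le_trans (hfdb x hxτ) ?_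
        rw [hKdef]
        apply mul_le_mul_of_nonneg_left _ hC7nn
        exact Real.rpow_le_rpow_of_nonpos ht20 (le_trans hτl h1) (by linarith)
    have e4 : |∫ τ in (t/2)..t, F τ| ≤ K * (4/σ^2) := by
      have hle : t/2 ≤ t := by linarith
      have hb1 : ∀ τ ∈ Set.Icc (t/2) t,
          ‖F τ‖ ≤ (K * (2/σ)) * Real.exp (-(σ/2*(t - τ))) := by
        intro τ hτ
        obtain ⟨h1, h2⟩ := hτ
        rw [hFdef, Real.norm_eq_abs, abs_mul, abs_of_pos (Real.exp_pos _)]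
        have h3 : |f τ - f t| ≤ K * (t - τ) := by
          rw [abs_sub_comm]; exact hMVT τ h1 h2
        have h4 : Real.exp (-(σ*(t-τ))) * (t - τ) ≤ (2/σ) * Real.exp (-(σ/2*(t-τ))) := by
          have h5 : -(σ*(t-τ)) = -(σ/2*(t-τ)) + -(σ/2*(t-τ)) := by ring
          rw [h5, Real.exp_add]
          have h6 := mul_exp_neg_le (show (0:ℝ) < σ/2 by linarith)
            (show (0:ℝ) ≤ t - τ by linarith)
          calc Real.exp (-(σ/2*(t-τ))) * Real.exp (-(σ/2*(t-τ))) * (t - τ)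
              = ((t-τ) * Real.exp (-(σ/2*(t-τ)))) * Real.exp (-(σ/2*(t-τ))) := by ring
            _ ≤ (1/(σ/2)) * Real.exp (-(σ/2*(t-τ))) :=
                mul_le_mul_of_nonneg_right h6 (Real.exp_pos _).le
            _ = (2/σ) * Real.exp (-(σ/2*(t-τ))) := by
                rw [one_div_div]
        calc Real.exp (-(σ*(t-τ))) * |f τ - f t|
            ≤ Real.exp (-(σ*(t-τ))) * (K * (t - τ)) :=
              mul_le_mul_of_nonneg_left h3 (Real.exp_pos _).le
          _ = K * (Real.exp (-(σ*(t-τ))) * (t - τ)) := by ring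
          _ ≤ K * ((2/σ) * Real.exp (-(σ/2*(t-τ)))) :=
              mul_le_mul_of_nonneg_left h4 hKnn
          _ = (K * (2/σ)) * Real.exp (-(σ/2*(t-τ))) := by ring
      have hrhsC : Continuous (fun τ : ℝ => (K * (2/σ)) * Real.exp (-(σ/2*(t - τ)))) :=
        continuous_const.mul (Real.continuous_exp.comp
          (continuous_const.mul (continuous_const.sub continuous_id)).neg)
      calc |∫ τ in (t/2)..t, F τ| ≤ ∫ τ in (t/2)..t, ‖F τ‖ := by
            simpa [Real.norm_eq_abs] using
              intervalIntegral.norm_integral_le_integral_norm (f := F) (a := t/2) (b := t) hle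
        _ ≤ ∫ τ in (t/2)..t, (K * (2/σ)) * Real.exp (-(σ/2*(t - τ))) := by
            apply intervalIntegral.integral_mono_on hle
              ((hFc (t/2) t ht20.le ht0.le).norm.intervalIntegrable)
              (hrhsC.intervalIntegrable _ _)
            intro x hx
            simpa [Real.norm_eq_abs] using hb1 x hx
        _ = (K * (2/σ)) * ∫ τ in (t/2)..t, Real.exp (-(σ/2*(t - τ))) :=
            intervalIntegral.integral_const_mul _ _
        _ ≤ (K * (2/σ)) * (1/(σ/2)) := by
            apply mul_le_mul_of_nonneg_left (integral_exp_decay_le (by linarith) hle)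
            exact mul_nonneg hKnn (by positivity)
        _ = K * (4/σ^2) := by
            field_simp; ring
    have hKt : K * (4/σ^2) = (4*C7*(2:ℝ)^lam/σ^2) * t ^ (-lam) := by
      rw [hKdef, Real.div_rpow ht0.le (by norm_num : (0:ℝ) ≤ 2),
        Real.rpow_neg (by norm_num : (0:ℝ) ≤ 2)]
      have h2l : ((2:ℝ) ^ lam) ≠ 0 := by positivity
      field_simp
    have etail : |f t * Real.exp (-(σ*t))/σ| ≤ Mt t * Real.exp (-(σ*t))/σ := by
      rw [abs_of_pos (div_pos (mul_pos hft (Real.exp_pos _)) hσ)]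
      gcongr

    rw [e1, e2]
    have erw : (∫ τ in (0:ℝ)..(t/2), F τ) + (∫ τ in (t/2)..t, F τ)
          + f t * ((1 - Real.exp (-(σ*t)))/σ) - 1/σ * f t
        = (∫ τ in (0:ℝ)..(t/2), F τ) + ((∫ τ in (t/2)..t, F τ)
          - f t * Real.exp (-(σ*t))/σ) := by ring
    rw [erw]
    have habs1 := abs_add_le (∫ τ in (0:ℝ)..(t/2), F τ)
      ((∫ τ in (t/2)..t, F τ) - f t * Real.exp (-(σ*t))/σ)
    have habs2 := abs_sub (∫ τ in (t/2)..t, F τ) (f t * Real.exp (-(σ*t))/σ)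
    rw [hKt] at e4
    linarith
  -- growth bound on Mt
  set CM : ℝ := Real.exp (A1 + A2 * |Real.log (Real.log Tstar)|) * (2:ℝ) ^ A2 with hCMdef
  have hCMpos : 0 < CM := by rw [hCMdef]; positivity
  have hMtle : ∀ t : ℝ, 1 ≤ t → Tstar ≤ t → Real.exp 1 ≤ t → Mt t ≤ CM * t ^ A2 := by
    intro t h1 h2 h3
    have ht0 : (0:ℝ) < t := by linarith
    have hTt : (0:ℝ) < Tstar + t := by linarith
    have hlog1 : 1 ≤ Real.log (Tstar + t) := by
      rw [show (1:ℝ) = Real.log (Real.exp 1) from (Real.log_exp 1).symm]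
      exact Real.log_le_log (Real.exp_pos 1) (by linarith)
    have hll : 0 ≤ Real.log (Real.log (Tstar + t)) := Real.log_nonneg hlog1
    rw [hMtdef, hCMdef]
    simp only []
    rw [abs_of_nonneg hll,
      show A1 + A2 * (|Real.log (Real.log Tstar)| + Real.log (Real.log (Tstar + t)))
        = (A1 + A2 * |Real.log (Real.log Tstar)|) + A2 * Real.log (Real.log (Tstar + t)) by ring,
      Real.exp_add, mul_assoc]
    apply mul_le_mul_of_nonneg_left _ (Real.exp_pos _).le
    rw [mul_comm A2 _, ← Real.rpow_def_of_pos (by linarith : (0:ℝ) < Real.log (Tstar + t))]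
    calc Real.log (Tstar + t) ^ A2 ≤ (2*t) ^ A2 := by
          apply Real.rpow_le_rpow (by linarith) ?_ hA2nn
          have := Real.log_le_self hTt.le
          linarith
      _ = 2 ^ A2 * t ^ A2 := Real.mul_rpow (by norm_num) ht0.le
  -- eventual smallness of the exponential terms
  have hev : ∀ᶠ t : ℝ in Filter.atTop,
      Real.exp (-(σ*(t/2))) * (2*Mt t) * (t/2) + Mt t * Real.exp (-(σ*t))/σ
        ≤ t ^ (-lam) := by
    have htend := tendsto_rpow_mul_exp_neg_mul_atTop_nhds_zero (A2 + 1 + lam) (σ/2)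
      (by linarith)
    have hden : (0:ℝ) < CM * (1 + 1/σ) := by positivity
    have hsmall : ∀ᶠ x : ℝ in Filter.atTop,
        x ^ (A2+1+lam) * Real.exp (-(σ/2) * x) < 1 / (CM * (1 + 1/σ)) :=
      htend.eventually_lt_const (by positivity)
    filter_upwards [hsmall, Filter.eventually_ge_atTop (1:ℝ),
      Filter.eventually_ge_atTop Tstar, Filter.eventually_ge_atTop (Real.exp 1)]
      with t h1 h2 h3 h4
    have ht0 : (0:ℝ) < t := by linarith
    have hM := hMtle t h2 h3 h4
    have hMnn : 0 ≤ Mt t := (hMtpos t).le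
    have hrnn : 0 ≤ t ^ A2 := Real.rpow_nonneg ht0.le _
    have hE : Real.exp (-(σ*t)) ≤ Real.exp (-(σ*(t/2))) :=
      Real.exp_le_exp.mpr (by nlinarith)
    have hepos : 0 < Real.exp (-(σ*(t/2))) := Real.exp_pos _
    have hA21 : t ^ A2 * t = t ^ (A2 + 1) := by
      rw [Real.rpow_add ht0, Real.rpow_one]
    have hA2mono : t ^ A2 ≤ t ^ (A2 + 1) :=
      Real.rpow_le_rpow_of_exponent_le h2 (by linarith)
    have step1 : Real.exp (-(σ*(t/2))) * (2*Mt t) * (t/2)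
        ≤ CM * (t ^ (A2+1) * Real.exp (-(σ*(t/2)))) := by
      have : Real.exp (-(σ*(t/2))) * (2*Mt t) * (t/2) = Mt t * t * Real.exp (-(σ*(t/2))) := by
        ring
      rw [this]
      have h5 : Mt t * t ≤ CM * t ^ (A2+1) := by
        calc Mt t * t ≤ (CM * t ^ A2) * t := mul_le_mul_of_nonneg_right hM ht0.le
          _ = CM * (t ^ A2 * t) := by ring
          _ = CM * t ^ (A2+1) := by rw [hA21]
      calc Mt t * t * Real.exp (-(σ*(t/2))) ≤ CM * t ^ (A2+1) * Real.exp (-(σ*(t/2))) :=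
            mul_le_mul_of_nonneg_right h5 hepos.le
        _ = CM * (t ^ (A2+1) * Real.exp (-(σ*(t/2)))) := by ring
    have step2 : Mt t * Real.exp (-(σ*t))/σ
        ≤ (CM/σ) * (t ^ (A2+1) * Real.exp (-(σ*(t/2)))) := by
      have h5 : Mt t * Real.exp (-(σ*t)) ≤ (CM * t ^ (A2+1)) * Real.exp (-(σ*(t/2))) := by
        refine mul_le_mul ?_ hE (Real.exp_pos _).le (by positivity)
        calc Mt t ≤ CM * t ^ A2 := hM
          _ ≤ CM * t ^ (A2+1) := mul_le_mul_of_nonneg_left hA2mono hCMpos.le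
      calc Mt t * Real.exp (-(σ*t))/σ
          ≤ ((CM * t ^ (A2+1)) * Real.exp (-(σ*(t/2))))/σ := by
            exact (div_le_div_iff_of_pos_right hσ).mpr h5
        _ = (CM/σ) * (t ^ (A2+1) * Real.exp (-(σ*(t/2)))) := by ring
    have hcomb : Real.exp (-(σ*(t/2))) * (2*Mt t) * (t/2) + Mt t * Real.exp (-(σ*t))/σ
        ≤ (CM * (1 + 1/σ)) * (t ^ (A2+1) * Real.exp (-(σ*(t/2)))) := by
      have : (CM * (1 + 1/σ)) * (t ^ (A2+1) * Real.exp (-(σ*(t/2))))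
          = CM * (t ^ (A2+1) * Real.exp (-(σ*(t/2))))
            + (CM/σ) * (t ^ (A2+1) * Real.exp (-(σ*(t/2)))) := by ring
      rw [this]
      linarith
    have hsplit : t ^ (A2+1) = t ^ (A2+1+lam) * t ^ (-lam) := by
      rw [← Real.rpow_add ht0]
      ring_nf
    have hexp2 : Real.exp (-(σ*(t/2))) = Real.exp (-(σ/2) * t) := by
      ring_nf
    have hfin : (CM * (1 + 1/σ)) * (t ^ (A2+1) * Real.exp (-(σ*(t/2)))) ≤ t ^ (-lam) := by
      rw [hsplit, hexp2]
      have h6 : t ^ (A2+1+lam) * Real.exp (-(σ/2) * t) ≤ 1 / (CM * (1 + 1/σ)) := h1.le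
      calc (CM * (1 + 1/σ)) * (t ^ (A2+1+lam) * t ^ (-lam) * Real.exp (-(σ/2) * t))
          = (CM * (1 + 1/σ)) * ((t ^ (A2+1+lam) * Real.exp (-(σ/2) * t)) * t ^ (-lam)) := by
            ring
        _ ≤ (CM * (1 + 1/σ)) * ((1 / (CM * (1 + 1/σ))) * t ^ (-lam)) := by
            apply mul_le_mul_of_nonneg_left _ hden.le
            exact mul_le_mul_of_nonneg_right h6 (Real.rpow_nonneg ht0.le _)
        _ = t ^ (-lam) := by
            rw [← mul_assoc, mul_one_div_cancel hden.ne', one_mul]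
    linarith
  obtain ⟨T1, hT1'⟩ := Filter.eventually_atTop.mp hev
  refine ⟨4*C7*(2:ℝ)^lam/σ^2 + 1, max T1 (max 1 (2*τstar)), ?_, ?_⟩
  · have h0 : (0:ℝ) ≤ 4*C7*(2:ℝ)^lam/σ^2 :=
      div_nonneg (mul_nonneg (mul_nonneg (by norm_num) hC7nn)
        (Real.rpow_nonneg (by norm_num) _)) (by positivity)
    linarith
  · intro t ht
    have h1 : (1:ℝ) ≤ t := le_trans (le_trans (le_max_left _ _) (le_max_right _ _)) ht
    have h2 : 2*τstar ≤ t := le_trans (le_trans (le_max_right _ _) (le_max_right _ _)) ht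
    have h3 := key t h1 h2
    have h4 := hT1' t (le_trans (le_max_left _ _) ht)
    have hgoal : |(∫ τ in (0:ℝ)..t,
          Real.exp (-σ * (t - τ)) * ∏ j, itLog (k j) (Tstar + τ) ^ (a j)) -
        1 / σ * ∏ j, itLog (k j) (Tstar + t) ^ (a j)|
        = |(∫ τ in (0:ℝ)..t, Real.exp (-(σ*(t - τ))) * f τ) - 1/σ * f t| := by
      rw [hfdef]
      simp only [neg_mul]
    rw [hgoal]
    have hrnn : (0:ℝ) ≤ t ^ (-lam) := Real.rpow_nonneg (by linarith) _
    calc |(∫ τ in (0:ℝ)..t, Real.exp (-(σ*(t - τ))) * f τ) - 1/σ * f t|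
        ≤ (4*C7*(2:ℝ)^lam/σ^2) * t ^ (-lam)
          + (Real.exp (-(σ*(t/2))) * (2*Mt t) * (t/2) + Mt t * Real.exp (-(σ*t))/σ) := h3
      _ ≤ (4*C7*(2:ℝ)^lam/σ^2) * t ^ (-lam) + t ^ (-lam) := by linarith
      _ = (4*C7*(2:ℝ)^lam/σ^2 + 1) * t ^ (-lam) := by ring
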